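/- arXiv:0912.0060 — 8 statements merged into one kernel-verified Lean document; each statement's English description precedes it below -/
import Mathlib

section
/- For all A, B, C in A(q), the triple product A · adj(B) · C again lies in A(q). -/
/-- The matrix `[x,y]_q`. -/
def Mq (a b c h k x y : ℚ) : Matrix (Fin 2) (Fin 2) ℚ :=
  !![x - h, -c * (y - k); y - k, a * (x - h) + b * (y - k)]

/-- The set `A(q)` of matrices `[x,y]_q`. -/
def Aq (a b c h k : ℚ) : Set (Matrix (Fin 2) (Fin 2) ℚ) :=
  {M | ∃ x y : ℚ, M = Mq a b c h k x y}

/-!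
Writing `u = x - h`, `v = y - k`, the set `A(q)` is the `ℚ`-subspace of matrices `M` with
`M₀₁ = -c M₁₀` and `M₁₁ = a M₀₀ + b M₁₀`. For `A, B` in it, `A · adj(B) = p + r G` with
`G = [[0, -c], [a, b]]`, and the subspace is stable under left multiplication by `G`;
hence `A · adj(B) · C = p C + r (G C)` lies in it again.
-/

section

open Matrix

variable {R : Type*} [CommRing R] (a b c : R)

def qSubmodule : Submodule R (Matrix (Fin 2) (Fin 2) R) where
  carrier := {M | M 0 1 = -c * M 1 0 ∧ M 1 1 = a * M 0 0 + b * M 1 0}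
  add_mem' := by
    rintro M N ⟨hM₀₁, hM₁₁⟩ ⟨hN₀₁, hN₁₁⟩
    simp only [Set.mem_ofPred_eq, Matrix.add_apply, hM₀₁, hM₁₁, hN₀₁, hN₁₁]
    constructor <;> ring
  zero_mem' := by simp
  smul_mem' := by
    rintro r M ⟨hM₀₁, hM₁₁⟩
    simp only [Set.mem_ofPred_eq, Matrix.smul_apply, smul_eq_mul, hM₀₁, hM₁₁]
    constructor <;> ring

variable {a b c}

theorem mem_qSubmodule {M : Matrix (Fin 2) (Fin 2) R} :
    M ∈ qSubmodule a b c ↔ M 0 1 = -c * M 1 0 ∧ M 1 1 = a * M 0 0 + b * M 1 0 :=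
  Iff.rfl

theorem mul_adjugate_eq_smul_one_add_smul {A B : Matrix (Fin 2) (Fin 2) R}
    (hA : A ∈ qSubmodule a b c) (hB : B ∈ qSubmodule a b c) :
    ∃ p r : R, A * B.adjugate = p • 1 + r • !![0, -c; a, b] := by
  obtain ⟨hA₀₁, hA₁₁⟩ := hA
  obtain ⟨hB₀₁, hB₁₁⟩ := hB
  refine ⟨(A * B.adjugate) 0 0, A 1 0 * B 0 0 - A 0 0 * B 1 0, ?_⟩
  ext i j
  fin_cases i <;> fin_cases j <;>
    simp [adjugate_fin_two, mul_apply, Fin.sum_univ_two, hA₀₁, hA₁₁, hB₀₁, hB₁₁] <;> ring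

theorem mul_mem_qSubmodule {M : Matrix (Fin 2) (Fin 2) R}
    (hM : M ∈ qSubmodule a b c) : !![0, -c; a, b] * M ∈ qSubmodule a b c := by
  obtain ⟨hM₀₁, hM₁₁⟩ := hM
  rw [mem_qSubmodule]
  simp only [mul_apply, Fin.sum_univ_two, of_apply, cons_val', cons_val_zero, cons_val_one,
    empty_val', cons_val_fin_one, hM₀₁, hM₁₁]
  constructor <;> ring

theorem mul_adjugate_mul_mem_qSubmodule {A B C : Matrix (Fin 2) (Fin 2) R}
    (hA : A ∈ qSubmodule a b c) (hB : B ∈ qSubmodule a b c)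
    (hC : C ∈ qSubmodule a b c) : A * B.adjugate * C ∈ qSubmodule a b c := by
  obtain ⟨p, r, hAB⟩ := mul_adjugate_eq_smul_one_add_smul hA hB
  rw [hAB, add_mul, smul_mul_assoc, smul_mul_assoc, one_mul]
  exact add_mem (Submodule.smul_mem _ p hC) (Submodule.smul_mem _ r (mul_mem_qSubmodule hC))

theorem Aq_eq_qSubmodule (a b c h k : ℚ) : Aq a b c h k = qSubmodule a b c := by
  ext M
  constructor
  · rintro ⟨x, y, rfl⟩
    exact ⟨rfl, rfl⟩
  · rintro ⟨hM₀₁, hM₁₁⟩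
    refine ⟨M 0 0 + h, M 1 0 + k, ?_⟩
    ext i j
    fin_cases i <;> fin_cases j <;> simp [Mq, hM₀₁, hM₁₁]

end

/-- `A(q)` is closed under the triple product `A · adj(B) · C`. -/
theorem Aq_closed_triple_product (a b c h k : ℚ) :
    ∀ A ∈ Aq a b c h k, ∀ B ∈ Aq a b c h k, ∀ C ∈ Aq a b c h k,
      A * B.adjugate * C ∈ Aq a b c h k := by
  simp only [Aq_eq_qSubmodule, SetLike.mem_coe]
  intro A hA B hB C hC
  exact mul_adjugate_mul_mem_qSubmodule hA hB hC
end

section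
/- For all A, B, C in A(q), the triple product satisfies commutativity: A · adj(B) · C = C · adj(B) · A. -/
/-!
`A(q)` is the ℚ-span of `P = [[1, 0], [0, a]]` and `Q = [[0, -c], [1, b]]`. Any 2×2 matrices
satisfy `X · adj X · Y = det X · Y = Y · adj X · X`, and on 2×2 matrices `adj` is linear, so
`P · adj B · Q = Q · adj B · P` for every `B` in the span. Since `(A, C) ↦ A · adj B · C - C · adj B · A`
is bilinear and alternating, vanishing on the spanning pair `(P, Q)` makes it vanish on the whole span.
-/

open Submodule

theorem mul_mul_comm_of_mem_span_pair {R A : Type*} [CommSemiring R] [Ring A] [Algebra R A]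
    {x y m a c : A} (hxy : x * m * y = y * m * x)
    (ha : a ∈ span R {x, y}) (hc : c ∈ span R {x, y}) : a * m * c = c * m * a := by
  obtain ⟨α, β, rfl⟩ := mem_span_pair.mp ha
  obtain ⟨γ, δ, rfl⟩ := mem_span_pair.mp hc
  simp only [add_mul, mul_add, smul_mul_assoc, mul_smul_comm, hxy]
  module

namespace Matrix

variable {n R : Type*} [Fintype n] [DecidableEq n] [CommRing R]

theorem mul_adjugate_mul_comm (X Y : Matrix n n R) : X * adjugate X * Y = Y * adjugate X * X := by
  rw [mul_adjugate, mul_assoc Y, adjugate_mul, smul_one_mul, mul_smul_one]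

theorem adjugate_fin_two_add (A B : Matrix (Fin 2) (Fin 2) R) :
    adjugate (A + B) = adjugate A + adjugate B := by
  simp only [adjugate_fin_two, add_apply, neg_add, of_add_of, cons_add_cons, empty_add_empty]

theorem adjugate_fin_two_smul_add_smul (u v : R) (P Q : Matrix (Fin 2) (Fin 2) R) :
    adjugate (u • P + v • Q) = u • adjugate P + v • adjugate Q := by
  simp [adjugate_fin_two_add, adjugate_smul]

theorem mul_adjugate_mul_comm_of_mem_span_pair {P Q A B C : Matrix (Fin 2) (Fin 2) R}
    (hA : A ∈ span R {P, Q}) (hB : B ∈ span R {P, Q}) (hC : C ∈ span R {P, Q}) :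
    A * adjugate B * C = C * adjugate B * A := by
  obtain ⟨u, v, rfl⟩ := mem_span_pair.mp hB
  refine mul_mul_comm_of_mem_span_pair ?_ hA hC
  simp only [adjugate_fin_two_smul_add_smul, mul_add, add_mul, mul_smul_comm, smul_mul_assoc,
    mul_adjugate_mul_comm P Q, mul_adjugate_mul_comm Q P]

end Matrix

theorem Mq_eq_smul_add_smul (a b c h k x y : ℚ) :
    Mq a b c h k x y = (x - h) • !![1, 0; 0, a] + (y - k) • !![0, -c; 1, b] := by
  ext i j
  fin_cases i <;> fin_cases j <;> simp [Mq] <;> ring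

theorem Aq_subset_span (a b c h k : ℚ) :
    Aq a b c h k ⊆ span ℚ {!![1, 0; 0, a], !![0, -c; 1, b]} := by
  rintro _ ⟨x, y, rfl⟩
  exact mem_span_pair.mpr ⟨_, _, (Mq_eq_smul_add_smul a b c h k x y).symm⟩

/-- The triple product on `A(q)` is commutative in the outer arguments. -/
theorem Aq_triple_product_comm (a b c h k : ℚ) :
    ∀ A ∈ Aq a b c h k, ∀ B ∈ Aq a b c h k, ∀ C ∈ Aq a b c h k,
      A * B.adjugate * C = C * B.adjugate * A := by
  intro A hA B hB C hC
  have hspan := Aq_subset_span a b c h k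
  exact Matrix.mul_adjugate_mul_comm_of_mem_span_pair (hspan hA) (hspan hB) (hspan hC)
end

section
/- Assume Disc(q) ≠ 0, Det(q) ≠ 0 (so m ≠ 0). If (x1,y1), (x2,y2), (x3,y3) are rational points on the conic q(x,y) = 0, then [x1,y1]_q · ([x2,y2]_q)⁻¹ · [x3,y3]_q is again of the form [x,y]_q for some rational point (x,y) on q(x,y) = 0. -/
namespace ConicMatrix

variable {R : Type*} [CommRing R] (a b c : R)

def family (X Y : R) : Matrix (Fin 2) (Fin 2) R :=
  !![X, -c * Y; Y, a * X + b * Y]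

def gen : Matrix (Fin 2) (Fin 2) R :=
  !![0, -c; a, b]

theorem det_family (X Y : R) : (family a b c X Y).det = a * X ^ 2 + b * X * Y + c * Y ^ 2 := by
  rw [family, Matrix.det_fin_two_of]
  ring

theorem smul_family (r X Y : R) : r • family a b c X Y = family a b c (r * X) (r * Y) := by
  ext i j
  fin_cases i <;> fin_cases j <;> simp [family, mul_add, mul_left_comm]

theorem gen_mul_family (X Y : R) :
    gen a b c * family a b c X Y = family a b c (-c * Y) (a * X + b * Y) := by
  ext i j
  fin_cases i <;> fin_cases j <;> simp [gen, family, Matrix.mul_apply]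

theorem family_mul_adjugate (X₁ Y₁ X₂ Y₂ : R) :
    family a b c X₁ Y₁ * (family a b c X₂ Y₂).adjugate =
      (a * X₁ * X₂ + b * X₁ * Y₂ + c * Y₁ * Y₂) • 1 - (X₁ * Y₂ - X₂ * Y₁) • gen a b c := by
  rw [family, family, Matrix.adjugate_fin_two_of]
  ext i j
  fin_cases i <;> fin_cases j <;> simp [gen, Matrix.mul_apply] <;> ring

theorem family_mul_adjugate_mul (X₁ Y₁ X₂ Y₂ X₃ Y₃ : R) :
    family a b c X₁ Y₁ * (family a b c X₂ Y₂).adjugate * family a b c X₃ Y₃ =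
      family a b c
        ((a * X₁ * X₂ + b * X₁ * Y₂ + c * Y₁ * Y₂) * X₃ + c * (X₁ * Y₂ - X₂ * Y₁) * Y₃)
        ((a * X₁ * X₂ + b * X₁ * Y₂ + c * Y₁ * Y₂) * Y₃ -
          (X₁ * Y₂ - X₂ * Y₁) * (a * X₃ + b * Y₃)) := by
  rw [family_mul_adjugate, Matrix.sub_mul, Matrix.smul_mul, Matrix.smul_mul, Matrix.one_mul,
    gen_mul_family, smul_family, smul_family]
  ext i j
  fin_cases i <;> fin_cases j <;> simp [family] <;> ring

theorem exists_family_eq_mul_inv_mul (X₁ Y₁ X₂ Y₂ X₃ Y₃ : R) :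
    ∃ X Y : R, family a b c X₁ Y₁ * (family a b c X₂ Y₂)⁻¹ * family a b c X₃ Y₃ =
      family a b c X Y := by
  rw [Matrix.inv_def, Matrix.mul_smul, Matrix.smul_mul, family_mul_adjugate_mul, smul_family]
  exact ⟨_, _, rfl⟩

end ConicMatrix

theorem Mq_eq_family (a b c h k x y : ℚ) :
    Mq a b c h k x y = ConicMatrix.family a b c (x - h) (y - k) :=
  rfl

theorem center_eqs_of_eq_div {K : Type*} [Field K] [CharZero K] {a b c d e h k : K}
    (hDisc : a * c - b ^ 2 / 4 ≠ 0)
    (hh : h = (b / 2 * (e / 2) - c * (d / 2)) / (a * c - b ^ 2 / 4))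
    (hk : k = -(a * (e / 2) - b / 2 * (d / 2)) / (a * c - b ^ 2 / 4)) :
    2 * a * h + b * k + d = 0 ∧ b * h + 2 * c * k + e = 0 := by
  have hhD : h * (a * c - b ^ 2 / 4) = b / 2 * (e / 2) - c * (d / 2) := by
    rw [hh, div_mul_cancel₀ _ hDisc]
  have hkD : k * (a * c - b ^ 2 / 4) = -(a * (e / 2) - b / 2 * (d / 2)) := by
    rw [hk, div_mul_cancel₀ _ hDisc]
  constructor <;> refine mul_right_cancel₀ hDisc ?_
  · linear_combination (2 * a) * hhD + b * hkD
  · linear_combination b * hhD + (2 * c) * hkD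

theorem conic_eq_translate_center {R : Type*} [CommRing R] {a b c d e f h k : R}
    (hc₁ : 2 * a * h + b * k + d = 0) (hc₂ : b * h + 2 * c * k + e = 0) (x y : R) :
    a * x ^ 2 + b * x * y + c * y ^ 2 + d * x + e * y + f =
      a * (x - h) ^ 2 + b * (x - h) * (y - k) + c * (y - k) ^ 2 +
        (a * h ^ 2 + b * h * k + c * k ^ 2 + d * h + e * k + f) := by
  linear_combination (x - h) * hc₁ + (y - k) * hc₂

theorem conic_matrix_triple_product_general (a b c d e f h k x1 y1 x2 y2 x3 y3 : ℚ)
    (hDisc : a * c - b ^ 2 / 4 ≠ 0)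
    (hh : h = (b / 2 * (e / 2) - c * (d / 2)) / (a * c - b ^ 2 / 4))
    (hk : k = -(a * (e / 2) - b / 2 * (d / 2)) / (a * c - b ^ 2 / 4))
    (h1 : a * x1 ^ 2 + b * x1 * y1 + c * y1 ^ 2 + d * x1 + e * y1 + f = 0)
    (h2 : a * x2 ^ 2 + b * x2 * y2 + c * y2 ^ 2 + d * x2 + e * y2 + f = 0)
    (h3 : a * x3 ^ 2 + b * x3 * y3 + c * y3 ^ 2 + d * x3 + e * y3 + f = 0) :
    ∃ x y : ℚ,
      a * x ^ 2 + b * x * y + c * y ^ 2 + d * x + e * y + f = 0 ∧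
      Mq a b c h k x1 y1 * (Mq a b c h k x2 y2)⁻¹ * Mq a b c h k x3 y3 =
        Mq a b c h k x y := by
  obtain ⟨hc₁, hc₂⟩ := center_eqs_of_eq_div hDisc hh hk
  have htr := conic_eq_translate_center (f := f) hc₁ hc₂
  set m := -(a * h ^ 2 + b * h * k + c * k ^ 2 + d * h + e * k + f)
  have hdet : ∀ x y, a * x ^ 2 + b * x * y + c * y ^ 2 + d * x + e * y + f = 0 →
      (ConicMatrix.family a b c (x - h) (y - k)).det = m := fun x y hxy => by
    rw [ConicMatrix.det_family]
    linear_combination hxy - htr x y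
  simp only [Mq_eq_family]
  obtain ⟨u, v, huv⟩ := ConicMatrix.exists_family_eq_mul_inv_mul a b c
    (x1 - h) (y1 - k) (x2 - h) (y2 - k) (x3 - h) (y3 - k)
  have hnorm : a * u ^ 2 + b * u * v + c * v ^ 2 = m := by
    rw [← ConicMatrix.det_family, ← huv, Matrix.det_mul, Matrix.det_mul, Matrix.det_nonsing_inv,
      hdet x1 y1 h1, hdet x2 y2 h2, hdet x3 y3 h3, Ring.inverse_eq_inv', mul_inv_mul_cancel]
  refine ⟨h + u, k + v, ?_, by simpa using huv⟩
  linear_combination htr (h + u) (k + v) + hnorm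

/-- For rational points on the conic `q = 0` (with `Disc(q) ≠ 0` and `Det(q) ≠ 0`),
the matrix product `[P]_q · [Q]_q⁻¹ · [R]_q` is again `[x,y]_q` for a rational point
`(x,y)` on the conic. -/
theorem conic_matrix_triple_product (a b c d e f h k x1 y1 x2 y2 x3 y3 : ℚ)
    (hDisc : a * c - b ^ 2 / 4 ≠ 0)
    (hDet : Matrix.det !![a, b / 2, d / 2; b / 2, c, e / 2; d / 2, e / 2, f] ≠ 0)
    (hh : h = (b / 2 * (e / 2) - c * (d / 2)) / (a * c - b ^ 2 / 4))
    (hk : k = -(a * (e / 2) - b / 2 * (d / 2)) / (a * c - b ^ 2 / 4))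
    (h1 : a * x1 ^ 2 + b * x1 * y1 + c * y1 ^ 2 + d * x1 + e * y1 + f = 0)
    (h2 : a * x2 ^ 2 + b * x2 * y2 + c * y2 ^ 2 + d * x2 + e * y2 + f = 0)
    (h3 : a * x3 ^ 2 + b * x3 * y3 + c * y3 ^ 2 + d * x3 + e * y3 + f = 0) :
    ∃ x y : ℚ,
      a * x ^ 2 + b * x * y + c * y ^ 2 + d * x + e * y + f = 0 ∧
      Mq a b c h k x1 y1 * (Mq a b c h k x2 y2)⁻¹ * Mq a b c h k x3 y3 =
        Mq a b c h k x y :=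
  conic_matrix_triple_product_general a b c d e f h k x1 y1 x2 y2 x3 y3 hDisc hh hk h1 h2 h3
end

section
/- If the conic q = 0 (with Disc(q) ≠ 0, Det(q) ≠ 0) has a rational point Q₀, then taking R₀ = Q₀, every rational point P on the conic satisfies P·Q₀*·R₀ = P, and for every P the point R = Q₀·P*·R₀ satisfies P·Q₀*·R = R₀; hence the rational points of the conic form a commutative ternary group. -/
section

variable {a b c d e f h k : ℚ}

theorem center_equations (hDisc : a * c - b ^ 2 / 4 ≠ 0)
    (hh : h = (b / 2 * (e / 2) - c * (d / 2)) / (a * c - b ^ 2 / 4))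
    (hk : k = -(a * (e / 2) - b / 2 * (d / 2)) / (a * c - b ^ 2 / 4)) :
    2 * a * h + b * k + d = 0 ∧ b * h + 2 * c * k + e = 0 := by
  rw [eq_div_iff hDisc] at hh hk
  constructor
  · refine (mul_eq_zero.mp ?_).resolve_right hDisc
    linear_combination 2 * a * hh + b * hk
  · refine (mul_eq_zero.mp ?_).resolve_right hDisc
    linear_combination b * hh + 2 * c * hk

theorem Mq_det (x y : ℚ) :
    (Mq a b c h k x y).det = a * (x - h) ^ 2 + b * (x - h) * (y - k) + c * (y - k) ^ 2 := by
  rw [Mq, Matrix.det_fin_two_of]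
  ring

theorem conic_eq_Mq_det_sub (hd : 2 * a * h + b * k + d = 0) (he : b * h + 2 * c * k + e = 0)
    (x y : ℚ) :
    a * x ^ 2 + b * x * y + c * y ^ 2 + d * x + e * y + f =
      (Mq a b c h k x y).det - (a * h ^ 2 + b * h * k + c * k ^ 2 - f) := by
  rw [Mq_det]
  linear_combination x * hd + y * he

theorem det_conic_matrix (hd : 2 * a * h + b * k + d = 0) (he : b * h + 2 * c * k + e = 0) :
    Matrix.det !![a, b / 2, d / 2; b / 2, c, e / 2; d / 2, e / 2, f] =
      -(a * c - b ^ 2 / 4) * (a * h ^ 2 + b * h * k + c * k ^ 2 - f) := by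
  rw [eq_neg_of_add_eq_zero_right hd, eq_neg_of_add_eq_zero_right he]
  simp only [Matrix.det_fin_three, Matrix.of_apply, Matrix.cons_val', Matrix.cons_val_zero,
    Matrix.cons_val_one, Matrix.cons_val, Matrix.cons_val_fin_one]
  ring

end

theorem smul_Mq {a b c h k : ℚ} (t x y : ℚ) :
    t • Mq a b c h k x y = Mq a b c h k (h + t * (x - h)) (k + t * (y - k)) := by
  ext i j
  fin_cases i <;> fin_cases j <;> simp [Mq] <;> ring

theorem exists_Mq_eq_mul_adjugate_mul (a b c h k x₁ y₁ x₂ y₂ x₃ y₃ : ℚ) :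
    ∃ x y, Mq a b c h k x₁ y₁ * (Mq a b c h k x₂ y₂).adjugate * Mq a b c h k x₃ y₃ =
      Mq a b c h k x y := by
  set u₁ := x₁ - h
  set v₁ := y₁ - k
  set u₂ := x₂ - h
  set v₂ := y₂ - k
  set u₃ := x₃ - h
  set v₃ := y₃ - k
  -- `Mq x₁ y₁ * adjugate (Mq x₂ y₂) = !![p, c * s; -a * s, p - b * s]`
  set s := u₁ * v₂ - v₁ * u₂
  set p := a * u₁ * u₂ + b * u₁ * v₂ + c * v₁ * v₂
  refine ⟨h + (p * u₃ + c * s * v₃), k + ((p - b * s) * v₃ - a * s * u₃), ?_⟩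
  rw [Mq, Mq, Mq, Mq, Matrix.adjugate_fin_two_of, Matrix.mul_fin_two, Matrix.mul_fin_two]
  simp only [add_sub_cancel_left]
  congr 5 <;> ring

theorem exists_Mq_eq_mul_inv_mul (a b c h k x₁ y₁ x₂ y₂ x₃ y₃ : ℚ) :
    ∃ x y, Mq a b c h k x₁ y₁ * (Mq a b c h k x₂ y₂)⁻¹ * Mq a b c h k x₃ y₃ =
      Mq a b c h k x y := by
  obtain ⟨x, y, hxy⟩ := exists_Mq_eq_mul_adjugate_mul a b c h k x₁ y₁ x₂ y₂ x₃ y₃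
  rw [Matrix.inv_def, Matrix.mul_smul, Matrix.smul_mul, hxy, smul_Mq]
  exact ⟨_, _, rfl⟩

theorem Matrix.det_mul_nonsing_inv_mul {n K : Type*} [Fintype n] [DecidableEq n] [Field K]
    (A B C : Matrix n n K) : (A * B⁻¹ * C).det = A.det * C.det / B.det := by
  rw [Matrix.det_mul, Matrix.det_mul, Matrix.det_nonsing_inv, Ring.inverse_eq_inv']
  ring

/-- If the conic `q = 0` has a rational point `Q₀`, then with `R₀ = Q₀` every
rational point `P` on the conic satisfies `P·Q₀*·R₀ = P`, and `R = Q₀·P*·R₀`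
is a rational point on the conic satisfying `P·Q₀*·R = R₀` (all products taken
in the matrix representation). -/
theorem conic_ternary_group_identity_and_inverses (a b c d e f h k : ℚ)
    (hDisc : a * c - b ^ 2 / 4 ≠ 0)
    (hDet : Matrix.det !![a, b / 2, d / 2; b / 2, c, e / 2; d / 2, e / 2, f] ≠ 0)
    (hh : h = (b / 2 * (e / 2) - c * (d / 2)) / (a * c - b ^ 2 / 4))
    (hk : k = -(a * (e / 2) - b / 2 * (d / 2)) / (a * c - b ^ 2 / 4))
    (x0 y0 : ℚ)
    (hQ0 : a * x0 ^ 2 + b * x0 * y0 + c * y0 ^ 2 + d * x0 + e * y0 + f = 0) :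
    ∀ x y : ℚ,
      a * x ^ 2 + b * x * y + c * y ^ 2 + d * x + e * y + f = 0 →
      (Mq a b c h k x y * (Mq a b c h k x0 y0)⁻¹ * Mq a b c h k x0 y0 =
        Mq a b c h k x y) ∧
      (∃ xr yr : ℚ,
        a * xr ^ 2 + b * xr * yr + c * yr ^ 2 + d * xr + e * yr + f = 0 ∧
        Mq a b c h k x0 y0 * (Mq a b c h k x y)⁻¹ * Mq a b c h k x0 y0 =
          Mq a b c h k xr yr ∧
        Mq a b c h k x y * (Mq a b c h k x0 y0)⁻¹ * Mq a b c h k xr yr =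
          Mq a b c h k x0 y0) := by
  obtain ⟨hd, he⟩ := center_equations hDisc hh hk
  set m := a * h ^ 2 + b * h * k + c * k ^ 2 - f
  have hm : m ≠ 0 := by
    rw [det_conic_matrix hd he] at hDet
    exact right_ne_zero_of_mul hDet
  have on_conic (x y : ℚ) :
      a * x ^ 2 + b * x * y + c * y ^ 2 + d * x + e * y + f = 0 ↔ (Mq a b c h k x y).det = m := by
    rw [conic_eq_Mq_det_sub hd he, sub_eq_zero]
  have hQ0m := (on_conic x0 y0).1 hQ0
  have hQ0u : IsUnit (Mq a b c h k x0 y0).det := hQ0m ▸ hm.isUnit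
  intro x y hP
  have hPm := (on_conic x y).1 hP
  obtain ⟨xr, yr, hR⟩ := exists_Mq_eq_mul_inv_mul a b c h k x0 y0 x y x0 y0
  refine ⟨Matrix.nonsing_inv_mul_cancel_right _ _ hQ0u, xr, yr, ?_, hR, ?_⟩
  · rw [on_conic, ← hR, Matrix.det_mul_nonsing_inv_mul, hQ0m, hPm]
    field_simp
  · simp only [← hR, ← mul_assoc, Matrix.nonsing_inv_mul_cancel_right _ _ hQ0u,
      Matrix.mul_nonsing_inv _ (hPm ▸ hm.isUnit), one_mul]
end

section
/- Let C be a commutative ternary group with identity pair (Q₀, R₀). Let G be the set of formal symbols P·Q* (P, Q ∈ C) modulo the relation P·Q* ∼ R·S* iff P·Q*·R₀ = R·S*·R₀. Then G is an abelian group under (P·Q*)·(R·S*) := ((P·Q*·R)·S*) with identity R₀·Q₀*, and G acts transitively on C via (P·Q*)·R := P·Q*·R. -/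
/-!
Fixing the middle argument, `x ⋆ y := x·Q₀*·y` is a commutative group law on `C` with unit `R₀`,
and `P·Q*·R = (P·Q*·R₀) ⋆ R`. So a symbol `P·Q*` is determined up to `∼` by `P·Q*·R₀`, the
product of symbols corresponds to `⋆`, and the action is left translation in `(C, ⋆)`, which is
transitive.
-/

section CommTernary

variable {C : Type*} {op : C → C → C → C} {Q0 R0 : C}

theorem op_R0_Q0 (hcomm : ∀ P Q R, op P Q R = op R Q P) (hid : ∀ P, op P Q0 R0 = P) (P : C) :
    op R0 Q0 P = P := by
  rw [hcomm, hid]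

theorem op_eq_op_R0_Q0 (hcomm : ∀ P Q R, op P Q R = op R Q P)
    (hassoc : ∀ P Q R S T, op (op P Q R) S T = op P Q (op R S T))
    (hid : ∀ P, op P Q0 R0 = P) (P Q R : C) :
    op P Q R = op (op P Q R0) Q0 R := by
  rw [hassoc, op_R0_Q0 hcomm hid]

theorem op_op_R0 (hcomm : ∀ P Q R, op P Q R = op R Q P)
    (hassoc : ∀ P Q R S T, op (op P Q R) S T = op P Q (op R S T))
    (hid : ∀ P, op P Q0 R0 = P) (P Q R S : C) :
    op (op P Q R) S R0 = op (op P Q R0) Q0 (op R S R0) := by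
  rw [hassoc, ← op_eq_op_R0_Q0 hcomm hassoc hid]

theorem exists_op_Q0_eq (hcomm : ∀ P Q R, op P Q R = op R Q P)
    (hassoc : ∀ P Q R S T, op (op P Q R) S T = op P Q (op R S T))
    (hid : ∀ P, op P Q0 R0 = P) (hinv : ∀ P, ∃ R, op P Q0 R = R0) (P Q : C) :
    ∃ A, op A Q0 P = Q := by
  obtain ⟨R, hR⟩ := hinv P
  exact ⟨op Q Q0 R, by rw [hassoc, hcomm R, hR, hid]⟩

end CommTernary

/-- From a commutative ternary group `C` with triple product `op` and identity pair
`(Q₀, R₀)`, the formal symbols `P·Q*` (pairs `(P,Q)`) modulo the relation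
`P·Q* ∼ R·S* ↔ P·Q*·R₀ = R·S*·R₀` form an abelian group under
`(P·Q*)·(R·S*) := (P·Q*·R)·S*` with identity `R₀·Q₀*`, acting transitively on `C`
via `(P·Q*)·R := P·Q*·R`. -/
theorem ternary_group_acting_group {C : Type*} (op : C → C → C → C)
    (hcomm : ∀ P Q R, op P Q R = op R Q P)
    (hassoc : ∀ P Q R S T, op (op P Q R) S T = op P Q (op R S T))
    (Q0 R0 : C)
    (hid : ∀ P, op P Q0 R0 = P)
    (hinv : ∀ P, ∃ R, op P Q0 R = R0)
    (rel : C × C → C × C → Prop)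
    (hrel : ∀ g h, rel g h ↔ op g.1 g.2 R0 = op h.1 h.2 R0)
    (mul : C × C → C × C → C × C)
    (hmul : ∀ g h, mul g h = (op g.1 g.2 h.1, h.2))
    (act : C × C → C → C)
    (hact : ∀ g P, act g P = op g.1 g.2 P) :
    -- `rel` is an equivalence relation
    Equivalence rel ∧
    -- multiplication is well defined modulo `rel`
    (∀ g g' h h', rel g g' → rel h h' → rel (mul g h) (mul g' h')) ∧
    -- commutativity and associativity
    (∀ g h, rel (mul g h) (mul h g)) ∧
    (∀ g h i, rel (mul (mul g h) i) (mul g (mul h i))) ∧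
    -- identity `R₀·Q₀*` and inverses
    (∀ g, rel (mul (R0, Q0) g) g ∧ rel (mul g (R0, Q0)) g) ∧
    (∀ g, ∃ g', rel (mul g g') (R0, Q0)) ∧
    -- the action is well defined, compatible with multiplication, and transitive
    (∀ g g', rel g g' → ∀ P, act g P = act g' P) ∧
    (∀ g h P, act (mul g h) P = act g (act h P)) ∧
    (∀ P, act (R0, Q0) P = P) ∧
    (∀ P Q, ∃ g, act g P = Q) := by
  obtain rfl : rel = fun g h => op g.1 g.2 R0 = op h.1 h.2 R0 := by ext; exact hrel _ _
  obtain rfl : mul = fun g h => (op g.1 g.2 h.1, h.2) := by ext : 2; exact hmul _ _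
  obtain rfl : act = fun g P => op g.1 g.2 P := by ext : 2; exact hact _ _
  have hprod := op_op_R0 hcomm hassoc hid
  refine ⟨(Setoid.ker fun g : C × C => op g.1 g.2 R0).iseqv, ?_, ?_, ?_, ?_, ?_, ?_, ?_, ?_, ?_⟩
  · rintro g g' h h' (hg : op g.1 g.2 R0 = _) (hh : op h.1 h.2 R0 = _)
    simp only [hprod, hg, hh]
  · intro g h
    simp only [hprod, hcomm _ Q0]
  · intro g h i
    simp only [hprod, hassoc _ Q0]
  · exact fun g => ⟨by simp only [op_R0_Q0 hcomm hid], by simp only [hid]⟩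
  · intro g
    obtain ⟨R, hR⟩ := hinv (op g.1 g.2 R0)
    exact ⟨(R, Q0), by simp only [hprod, hid, hR]⟩
  · rintro g g' (hg : op g.1 g.2 R0 = _) P
    dsimp only
    rw [op_eq_op_R0_Q0 hcomm hassoc hid, hg, ← op_eq_op_R0_Q0 hcomm hassoc hid]
  · exact fun g h P => hassoc _ _ _ _ _
  · exact op_R0_Q0 hcomm hid
  · intro P Q
    obtain ⟨A, hA⟩ := exists_op_Q0_eq hcomm hassoc hid hinv P Q
    exact ⟨(A, Q0), hA⟩
end

section
/- Let A be a ternary algebra over ℚ admitting B₀, C₀ with A·B₀*·C₀ = A for all A. Define R as formal symbols A·B₀* (A ∈ A) with addition (A·B₀*) + (B·B₀*) = (A+B)·B₀* and multiplication (A·B₀*)·(B·B₀*) = (A·B₀*·B)·B₀*. Then multiplication on R is commutative with identity C₀·B₀*, and A is a left R-module via (A·B₀*)·C := A·B₀*·C. -/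
/-!
Every identity is associativity of the triple product, after outer commutativity
`op A B C = op C B A` has moved the identity pair or additivity to the side where it is assumed.
-/

section TripleProduct

variable {V : Type*} (op : V → V → V → V)

theorem op_add_right [Add V] (hcomm : ∀ A B C, op A B C = op C B A)
    (hdistrib : ∀ A B C D, op (A + D) B C = op A B C + op D B C) (A B C D : V) :
    op A B (C + D) = op A B C + op A B D := by
  rw [hcomm, hdistrib, hcomm C, hcomm D]

theorem op_left_id (hcomm : ∀ A B C, op A B C = op C B A) {B0 C0 : V}
    (hid : ∀ A, op A B0 C0 = A) (A : V) : op C0 B0 A = A := by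
  rw [hcomm, hid]

end TripleProduct

theorem ternary_algebra_scalar_ring_general {V : Type*} [AddCommGroup V]
    (op : V → V → V → V)
    (hcomm : ∀ A B C, op A B C = op C B A)
    (hassoc : ∀ A B C D E, op (op A B C) D E = op A B (op C D E))
    (hdistrib : ∀ A B C D, op (A + D) B C = op A B C + op D B C)
    (B0 C0 : V)
    (hid : ∀ A, op A B0 C0 = A)
    (mul : V → V → V) (hmul : ∀ A B, mul A B = op A B0 B)
    (smul : V → V → V) (hsmul : ∀ A C, smul A C = op A B0 C) :
    -- multiplication of symbols is commutative with identity `C₀·B₀*`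
    (∀ A B, mul A B = mul B A) ∧
    (∀ A, mul C0 A = A ∧ mul A C0 = A) ∧
    (∀ A B D, mul (mul A B) D = mul A (mul B D)) ∧
    -- left-module axioms for the action of the symbols on `V`
    (∀ A B C, smul (mul A B) C = smul A (smul B C)) ∧
    (∀ C, smul C0 C = C) ∧
    (∀ A B C, smul (A + B) C = smul A C + smul B C) ∧
    (∀ A C D, smul A (C + D) = smul A C + smul A D) := by
  obtain rfl : mul = fun A B => op A B0 B := funext₂ hmul
  obtain rfl : smul = fun A C => op A B0 C := funext₂ hsmul
  exact ⟨fun A B => hcomm A B0 B,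
    fun A => ⟨op_left_id op hcomm hid A, hid A⟩,
    fun A B D => hassoc A B0 B B0 D,
    fun A B C => hassoc A B0 B B0 C,
    op_left_id op hcomm hid,
    fun A B C => hdistrib A B0 C B,
    fun A C D => op_add_right op hcomm hdistrib A B0 C D⟩

/-- In a ternary algebra over `ℚ` with identity pair `(B₀, C₀)`, the symbols `A·B₀*`
(identified with elements `A`) form a commutative multiplicative structure with
identity `C₀·B₀*` under `(A·B₀*)·(B·B₀*) := (A·B₀*·B)·B₀*`, and the algebra is a left
module over it via `(A·B₀*)·C := A·B₀*·C`. -/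
theorem ternary_algebra_scalar_ring {V : Type*} [AddCommGroup V] [Module ℚ V]
    (op : V → V → V → V)
    (hcomm : ∀ A B C, op A B C = op C B A)
    (hassoc : ∀ A B C D E, op (op A B C) D E = op A B (op C D E))
    (hdistrib : ∀ A B C D, op (A + D) B C = op A B C + op D B C)
    (hlin : ∀ (α : ℚ) (A B C), op (α • A) B C = α • op A B C ∧
      α • op A B C = op A B (α • C))
    (B0 C0 : V)
    (hid : ∀ A, op A B0 C0 = A)
    (mul : V → V → V) (hmul : ∀ A B, mul A B = op A B0 B)
    (smul : V → V → V) (hsmul : ∀ A C, smul A C = op A B0 C) :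
    -- multiplication of symbols is commutative with identity `C₀·B₀*`
    (∀ A B, mul A B = mul B A) ∧
    (∀ A, mul C0 A = A ∧ mul A C0 = A) ∧
    (∀ A B D, mul (mul A B) D = mul A (mul B D)) ∧
    -- left-module axioms for the action of the symbols on `V`
    (∀ A B C, smul (mul A B) C = smul A (smul B C)) ∧
    (∀ C, smul C0 C = C) ∧
    (∀ A B C, smul (A + B) C = smul A C + smul B C) ∧
    (∀ A C D, smul A (C + D) = smul A C + smul A D) :=
  ternary_algebra_scalar_ring_general op hcomm hassoc hdistrib B0 C0 hid mul hmul smul hsmul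
end

section
/- Fix a rational quadratic polynomial q with Disc(q) ≠ 0 and set m = −Det(q)/Disc(q). Let ℚ(q) = { q(x,y) : x, y ∈ ℚ, q(x,y) ≠ −m }. For α, β, γ ∈ ℚ(q), the value ((α+m)(γ+m)/(β+m)) − m again lies in ℚ(q), i.e., it equals q(x,y) for some rational x, y with q(x,y) ≠ −m. -/
/-!
Moving the origin to the centre of the conic turns `q + m` into the binary quadratic form
`Q(X, Y) = a X² + b X Y + c Y²`, so it suffices that the nonzero values of `Q` are closed under
`(α, β, γ) ↦ α γ / β`. This is a composition law: the Lagrange identity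
`4 Q(v₁) Q(v₃) = P² + (4ac - b²) δ²`, with `P` the polar form of `Q` at `(v₁, v₃)` and
`δ = det (v₁, v₃)`, shows that `4 Q(v₁) Q(v₂) Q(v₃)` is the value of `Q` at `P v₂ + δ w`, where `w`
is `Q`-orthogonal to `v₂` with `Q(w) = (4ac - b²) Q(v₂)`; dividing that point by `2 Q(v₂)` gives the
value `Q(v₁) Q(v₃) / Q(v₂)`.
-/

def binForm {R : Type*} [CommRing R] (a b c x y : R) : R := a * x ^ 2 + b * x * y + c * y ^ 2

section CommRing

variable {R : Type*} [CommRing R] (a b c : R)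

theorem binForm_mul_mul (t x y : R) :
    binForm a b c (t * x) (t * y) = t ^ 2 * binForm a b c x y := by
  unfold binForm; ring

theorem binForm_composition (x₁ y₁ x₂ y₂ x₃ y₃ : R) :
    binForm a b c
        ((2 * a * x₁ * x₃ + b * (x₁ * y₃ + y₁ * x₃) + 2 * c * y₁ * y₃) * x₂
          - (x₁ * y₃ - y₁ * x₃) * (b * x₂ + 2 * c * y₂))
        ((2 * a * x₁ * x₃ + b * (x₁ * y₃ + y₁ * x₃) + 2 * c * y₁ * y₃) * y₂
          + (x₁ * y₃ - y₁ * x₃) * (2 * a * x₂ + b * y₂)) =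
      4 * binForm a b c x₁ y₁ * binForm a b c x₂ y₂ * binForm a b c x₃ y₃ := by
  unfold binForm; ring

end CommRing

section Field

variable {K : Type*} [Field K] [NeZero (2 : K)] {a b c : K}

theorem exists_binForm_eq_mul_div {x₁ y₁ x₂ y₂ x₃ y₃ : K} (h : binForm a b c x₂ y₂ ≠ 0) :
    ∃ x y, binForm a b c x y =
      binForm a b c x₁ y₁ * binForm a b c x₃ y₃ / binForm a b c x₂ y₂ := by
  refine ⟨(2 * binForm a b c x₂ y₂)⁻¹ *
      ((2 * a * x₁ * x₃ + b * (x₁ * y₃ + y₁ * x₃) + 2 * c * y₁ * y₃) * x₂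
          - (x₁ * y₃ - y₁ * x₃) * (b * x₂ + 2 * c * y₂)),
    (2 * binForm a b c x₂ y₂)⁻¹ *
      ((2 * a * x₁ * x₃ + b * (x₁ * y₃ + y₁ * x₃) + 2 * c * y₁ * y₃) * y₂
          + (x₁ * y₃ - y₁ * x₃) * (2 * a * x₂ + b * y₂)), ?_⟩
  rw [binForm_mul_mul, binForm_composition]
  field_simp
  ring

theorem exists_conic_eq_translate_binForm (d e f : K) (hD : a * c - b ^ 2 / 4 ≠ 0) :
    ∃ x₀ y₀, ∀ x y, a * x ^ 2 + b * x * y + c * y ^ 2 + d * x + e * y + f =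
      binForm a b c (x - x₀) (y - y₀) +
        Matrix.det !![a, b / 2, d / 2; b / 2, c, e / 2; d / 2, e / 2, f] / (a * c - b ^ 2 / 4) := by
  -- the centre, where the gradient of the conic vanishes
  refine ⟨(b * e - 2 * c * d) / (4 * (a * c - b ^ 2 / 4)),
    (b * d - 2 * a * e) / (4 * (a * c - b ^ 2 / 4)), fun x y => ?_⟩
  have h4 : (4 : K) ≠ 0 := by
    have := mul_ne_zero (two_ne_zero' K) (two_ne_zero' K); norm_num at this ⊢; exact this
  -- stated in the normal form `field_simp` produces for the denominators
  have hD4 : a * c * 4 - b ^ 2 ≠ 0 := by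
    contrapose! hD; field_simp; linear_combination hD
  rw [Matrix.det_fin_three]
  simp only [binForm, Matrix.of_apply, Matrix.cons_val', Matrix.cons_val_zero,
    Matrix.cons_val_one, Matrix.cons_val_two, Matrix.empty_val', Matrix.cons_val_fin_one,
    Matrix.head_cons, Matrix.tail_cons, Matrix.head_fin_const]
  field_simp
  ring

end Field

/-- The set `ℚ(q)` of values `q(x,y) ≠ -m` (with `m = -Det(q)/Disc(q)`,
`Disc(q) ≠ 0`) is closed under `α·β*·γ = (α+m)(γ+m)/(β+m) - m`. -/
theorem value_set_closed_triple_product (a b c d e f m : ℚ)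
    (hDisc : a * c - b ^ 2 / 4 ≠ 0)
    (hm : m = -(Matrix.det !![a, b / 2, d / 2; b / 2, c, e / 2; d / 2, e / 2, f])
              / (a * c - b ^ 2 / 4))
    (q : ℚ → ℚ → ℚ)
    (hq : ∀ x y, q x y = a * x ^ 2 + b * x * y + c * y ^ 2 + d * x + e * y + f)
    (α β γ : ℚ)
    (hα : ∃ x y, q x y = α ∧ q x y ≠ -m)
    (hβ : ∃ x y, q x y = β ∧ q x y ≠ -m)
    (hγ : ∃ x y, q x y = γ ∧ q x y ≠ -m) :
    ∃ x y, q x y = (α + m) * (γ + m) / (β + m) - m ∧ q x y ≠ -m := by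
  obtain ⟨x₀, y₀, hcenter⟩ := exists_conic_eq_translate_binForm d e f hDisc
  have hshift : ∀ x y, q x y + m = binForm a b c (x - x₀) (y - y₀) := fun x y => by
    rw [hq, hcenter, hm, neg_div]; ring
  obtain ⟨x₁, y₁, rfl, hα⟩ := hα
  obtain ⟨x₂, y₂, rfl, hβ⟩ := hβ
  obtain ⟨x₃, y₃, rfl, hγ⟩ := hγ
  have hne : ∀ x y, q x y ≠ -m → binForm a b c (x - x₀) (y - y₀) ≠ 0 := fun x y h => by
    rwa [← hshift, ne_eq, add_eq_zero_iff_eq_neg]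
  obtain ⟨X, Y, hXY⟩ := exists_binForm_eq_mul_div (hne x₂ y₂ hβ)
    (x₁ := x₁ - x₀) (y₁ := y₁ - y₀) (x₃ := x₃ - x₀) (y₃ := y₃ - y₀)
  have hvalue : q (X + x₀) (Y + y₀) + m = (q x₁ y₁ + m) * (q x₃ y₃ + m) / (q x₂ y₂ + m) := by
    simp only [hshift, add_sub_cancel_right, hXY]
  refine ⟨X + x₀, Y + y₀, eq_sub_of_add_eq hvalue, fun h => ?_⟩
  rw [h, neg_add_cancel, eq_comm, hshift, hshift, hshift] at hvalue
  exact div_ne_zero (mul_ne_zero (hne _ _ hα) (hne _ _ hγ)) (hne _ _ hβ) hvalue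
end

section
/- For rationals a, b, c, h, k and points P=(x1,y1), Q=(x2,y2) with D := det[x2,y2]_q ≠ 0, the inverse of [x2,y2]_q equals (1/D)·adj([x2,y2]_q), and the product [x1,y1]_q·adj([x2,y2]_q) commutes with [x3,y3]_q·adj([x4,y4]_q) for any further points: (A·adj(B))·(C·adj(D')) = (C·adj(D'))·(A·adj(B)) for all A, B, C, D' ∈ A(q). -/
section Rq

variable {R : Type*} [CommRing R]

def Rq (a b c : R) : Set (Matrix (Fin 2) (Fin 2) R) :=
  {M | ∃ u v : R, M = !![u, -c * v; a * v, u + b * v]}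

theorem Rq_form_eq_smul_one_add_smul (a b c u v : R) :
    !![u, -c * v; a * v, u + b * v] = u • 1 + v • !![0, -c; a, b] := by
  ext i j
  fin_cases i <;> fin_cases j <;> simp [mul_comm]

theorem commute_of_mem_Rq {a b c : R} {M N : Matrix (Fin 2) (Fin 2) R}
    (hM : M ∈ Rq a b c) (hN : N ∈ Rq a b c) : Commute M N := by
  obtain ⟨u, v, rfl⟩ := hM
  obtain ⟨u', v', rfl⟩ := hN
  rw [Rq_form_eq_smul_one_add_smul, Rq_form_eq_smul_one_add_smul]
  apply_rules [Commute.add_left, Commute.add_right, Commute.smul_left, Commute.smul_right,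
    Commute.one_left, Commute.one_right, Commute.refl]

theorem mul_adjugate_mem_Rq (a b c p q r s : R) :
    !![p, -c * q; q, a * p + b * q] * (!![r, -c * s; s, a * r + b * s]).adjugate ∈ Rq a b c := by
  refine ⟨a * p * r + b * p * s + c * q * s, q * r - p * s, ?_⟩
  rw [Matrix.adjugate_fin_two_of, Matrix.mul_fin_two]
  ext i j
  fin_cases i <;> fin_cases j <;>
    simp only [Fin.zero_eta, Fin.mk_one, Matrix.of_apply, Matrix.cons_val', Matrix.cons_val_zero,
      Matrix.cons_val_one, Matrix.cons_val_fin_one] <;> ring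

end Rq

theorem Mq_mul_adjugate_mem_Rq (a b c h k x1 y1 x2 y2 : ℚ) :
    Mq a b c h k x1 y1 * (Mq a b c h k x2 y2).adjugate ∈ Rq a b c :=
  mul_adjugate_mem_Rq a b c (x1 - h) (y1 - k) (x2 - h) (y2 - k)

/-- If `det [x₂,y₂]_q ≠ 0` then `([x₂,y₂]_q)⁻¹ = (1/det)·adj([x₂,y₂]_q)`, and all
products `A·adj(B)` with `A, B ∈ A(q)` commute with one another. -/
theorem Mq_inv_and_products_commute (a b c h k : ℚ) :
    (∀ x2 y2 : ℚ, (Mq a b c h k x2 y2).det ≠ 0 →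
      (Mq a b c h k x2 y2)⁻¹ =
        ((Mq a b c h k x2 y2).det)⁻¹ • (Mq a b c h k x2 y2).adjugate) ∧
    (∀ x1 y1 x2 y2 x3 y3 x4 y4 : ℚ,
      (Mq a b c h k x1 y1 * (Mq a b c h k x2 y2).adjugate)
          * (Mq a b c h k x3 y3 * (Mq a b c h k x4 y4).adjugate) =
        (Mq a b c h k x3 y3 * (Mq a b c h k x4 y4).adjugate)
          * (Mq a b c h k x1 y1 * (Mq a b c h k x2 y2).adjugate)) := by
  refine ⟨fun x2 y2 _ => ?_, fun x1 y1 x2 y2 x3 y3 x4 y4 => ?_⟩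
  · rw [Matrix.inv_def, Ring.inverse_eq_inv']
  · exact (commute_of_mem_Rq (Mq_mul_adjugate_mem_Rq a b c h k x1 y1 x2 y2)
      (Mq_mul_adjugate_mem_Rq a b c h k x3 y3 x4 y4)).eq
end
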